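/- Let G be a factorizable finite simple graph, M a perfect matching of G, and e = xy an edge of G not belonging to M. Then the following are equivalent: (i) e is allowed in G, i.e., e lies in some perfect matching of G; (ii) there is an M-alternating cycle containing e; (iii) there is an M-saturated path between x and y. -/

import Mathlib

open SimpleGraph

variable {V : Type*}

/-- A set of edges is pairwise vertex-disjoint. -/
def DisjointEdges (N : Set (Sym2 V)) : Prop :=
  ∀ e ∈ N, ∀ f ∈ N, e ≠ f → ∀ x : V, x ∈ e → x ∉ f

/-- `M` is a matching of `G`: a set of pairwise vertex-disjoint edges of `G`. -/
def IsMatchingSet (G : SimpleGraph V) (M : Set (Sym2 V)) : Prop :=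
  M ⊆ G.edgeSet ∧ DisjointEdges M

/-- `M` is a perfect matching of `G`: a matching covering every vertex. -/
def IsPerfectMatchingSet (G : SimpleGraph V) (M : Set (Sym2 V)) : Prop :=
  IsMatchingSet G M ∧ ∀ v : V, ∃ e ∈ M, v ∈ e

/-- `M` is a near-perfect matching of `G` whose unique exposed vertex is `v`. -/
def IsNearPerfectMatchingSet (G : SimpleGraph V) (M : Set (Sym2 V)) (v : V) : Prop :=
  IsMatchingSet G M ∧ (∀ e ∈ M, v ∉ e) ∧ ∀ u : V, u ≠ v → ∃ e ∈ M, u ∈ e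

/-- The induced subgraph `G[X]` has a perfect matching. -/
def HasPMOn (G : SimpleGraph V) (X : Set V) : Prop :=
  ∃ M : Set (Sym2 V), IsMatchingSet G M ∧ (∀ e ∈ M, ∀ x : V, x ∈ e → x ∈ X) ∧
    ∀ v ∈ X, ∃ e ∈ M, v ∈ e

/-- `G` is factorizable: it has a perfect matching. -/
def Factorizable (G : SimpleGraph V) : Prop :=
  ∃ M : Set (Sym2 V), IsPerfectMatchingSet G M

/-- `G` is factor-critical: deleting any single vertex leaves a factorizable graph. -/
def FactorCritical (G : SimpleGraph V) : Prop :=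
  ∀ v : V, HasPMOn G {v}ᶜ

/-- A walk is `M`-alternating: its edges outside `M` are pairwise vertex-disjoint. -/
def MAlternating (M : Set (Sym2 V)) {G : SimpleGraph V} {u v : V} (p : G.Walk u v) : Prop :=
  ∀ e ∈ p.edges, ∀ f ∈ p.edges, e ∉ M → f ∉ M → e ≠ f → ∀ x : V, x ∈ e → x ∉ f

/-- An `M`-saturated path: a path with an odd number of edges such that `M ∩ E(P)`
is a perfect matching of `P`. -/
def IsSaturatedPath (M : Set (Sym2 V)) {G : SimpleGraph V} {u v : V} (p : G.Walk u v) : Prop :=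
  p.IsPath ∧ Odd p.length ∧ ∀ x ∈ p.support, ∃ e ∈ p.edges, e ∈ M ∧ x ∈ e

/-- An `M`-exposed path: a path with an odd number of edges such that `E(P) \ M`
is a perfect matching of `P`. -/
def IsExposedPath (M : Set (Sym2 V)) {G : SimpleGraph V} {u v : V} (p : G.Walk u v) : Prop :=
  p.IsPath ∧ Odd p.length ∧ ∀ x ∈ p.support, ∃ e ∈ p.edges, e ∉ M ∧ x ∈ e

/-- An `M`-balanced path from `u` to `v`: an `M`-alternating path with an even number
of edges whose first edge (the one incident with `u`) belongs to `M`; a trivial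
one-vertex path is `M`-balanced. -/
def IsBalancedPath (M : Set (Sym2 V)) {G : SimpleGraph V} {u v : V} (p : G.Walk u v) : Prop :=
  p.IsPath ∧ Even p.length ∧ MAlternating M p ∧ ∀ e ∈ p.edges.head?, e ∈ M

/-- An edge of `G` is allowed if it lies in some perfect matching of `G`. -/
def Allowed (G : SimpleGraph V) (e : Sym2 V) : Prop :=
  ∃ M : Set (Sym2 V), IsPerfectMatchingSet G M ∧ e ∈ M

/-- The spanning subgraph of `G` formed by its allowed edges. -/
def allowedSubgraph (G : SimpleGraph V) : SimpleGraph V where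
  Adj u v := G.Adj u v ∧ Allowed G s(u, v)
  symm := by
    refine ⟨?_⟩
    intro u v h
    refine ⟨h.1.symm, ?_⟩
    rw [Sym2.eq_swap]
    exact h.2
  loopless := ⟨fun v h => G.loopless.irrefl v h.1⟩

/-- `C` is (the vertex set of) a factor-component of `G`: a connected component of the
spanning subgraph of `G` formed by the allowed edges (the factor-component itself being
the induced subgraph `G[C]`). -/
def IsFactorComponent (G : SimpleGraph V) (C : Set V) : Prop :=
  ∃ c : (allowedSubgraph G).ConnectedComponent, C = c.supp

/-- `G` is elementary: it is factorizable and has exactly one factor-component. -/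
def Elementary (G : SimpleGraph V) : Prop :=
  Factorizable G ∧ (allowedSubgraph G).Connected

/-- `X` is a separating set of `G`. -/
def Separating (G : SimpleGraph V) (X : Set V) : Prop :=
  ∀ C : Set V, IsFactorComponent G C → C ⊆ X ∨ Disjoint C X

/-- The contraction `G[X]/S`: the induced subgraph of `G` on `X` with `S` contracted
to a single vertex (the vertex `none`), deleting loops and parallel edges. -/
def contractOn (G : SimpleGraph V) (X S : Set V) : SimpleGraph (Option ↥(X \ S)) where
  Adj a b :=
    match a, b with
    | some x, some y => G.Adj x.1 y.1
    | some x, none => ∃ s ∈ S, G.Adj x.1 s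
    | none, some y => ∃ s ∈ S, G.Adj y.1 s
    | none, none => False
  symm := by
    refine ⟨?_⟩
    rintro (_ | x) (_ | y) h
    · exact h.elim
    · exact h
    · exact h
    · exact h.symm
  loopless := by
    refine ⟨?_⟩
    rintro (_ | x) h
    · exact h.elim
    · exact G.loopless.irrefl x.1 h

/-- `X` is a critical-inducing set for the factor-component (with vertex set) `C1`:
a separating set containing `C1` such that `G[X]/C1` is factor-critical. -/
def CriticalInducing (G : SimpleGraph V) (C1 X : Set V) : Prop :=
  Separating G X ∧ C1 ⊆ X ∧ FactorCritical (contractOn G X C1)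

/-- `C1 ⊵ C2`: there is a critical-inducing set for `C1` to `C2`. -/
def Yield (G : SimpleGraph V) (C1 C2 : Set V) : Prop :=
  ∃ X : Set V, CriticalInducing G C1 X ∧ C2 ⊆ X

/-- `u ∼ v`: `u = v` or `G - u - v` has no perfect matching. -/
def SimRel (G : SimpleGraph V) (u v : V) : Prop :=
  u = v ∨ ¬ HasPMOn G (({u, v} : Set V)ᶜ)

/-- An `M`-ear relative to the vertex set `X`: a path whose two end vertices lie in `X`
and whose internal vertices do not (or a cycle with exactly one vertex in `X`), such
that the ear minus `X` is an `M`-saturated path. -/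
def IsMEar (G : SimpleGraph V) (M : Set (Sym2 V)) (X : Set V) {u v : V}
    (p : G.Walk u v) : Prop :=
  u ∈ X ∧ v ∈ X ∧ ((∃ h : u = v, (p.copy rfl h.symm).IsCycle) ∨ (u ≠ v ∧ p.IsPath)) ∧
  ∃ (x y : V) (hux : G.Adj u x) (q : G.Walk x y) (hyv : G.Adj y v),
    p = SimpleGraph.Walk.cons hux (q.concat hyv) ∧
    IsSaturatedPath M q ∧ ∀ w ∈ q.support, w ∉ X

/-- An `M`-ear relative to `X` through (the factor-component with vertex set) `C`:
some internal vertex of the ear lies in `C`. -/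
def IsMEarThrough (G : SimpleGraph V) (M : Set (Sym2 V)) (X C : Set V) {u v : V}
    (p : G.Walk u v) : Prop :=
  IsMEar G M X p ∧ ∃ w ∈ p.support, w ∉ X ∧ w ∈ C

/-- An `M`-ear sequence `(H 0, …, H k)` of pairwise distinct factor-components,
where for each `i` there is an `M`-ear relative to `H i` through `H (i+1)`. -/
def IsMEarSequence (G : SimpleGraph V) (M : Set (Sym2 V)) (k : ℕ)
    (H : Fin (k + 1) → Set V) : Prop :=
  (∀ i, IsFactorComponent G (H i)) ∧ Function.Injective H ∧
  ∀ i : Fin k, ∃ (u v : V) (p : G.Walk u v),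
    IsMEarThrough G M (H i.castSucc) (H i.succ) p

/-!
(iii) ⇒ (ii): closing an `M`-saturated `x`–`y` path by the edge `yx` gives a cycle, and it is
`M`-alternating because a cycle has only two edges at each vertex, one of which is the `M`-edge
of the path. (ii) ⇒ (i): the symmetric difference of `M` with the edges of an `M`-alternating
cycle is again a perfect matching, and it contains the non-`M` edge `xy`.
(i) ⇒ (iii): let `N` be a perfect matching containing `xy`, and let `m`, `n` be the partner maps
of `M` and `N`. The sequence `x, m x, n (m x), …` never repeats a vertex at odd distance, and a
repetition at even distance propagates back to `x`. By finiteness it returns to `x`, first at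
some step `2k`, and it arrives there along the `N`-edge `yx`. Its first `2k` vertices are
therefore distinct and form an `M`-saturated path from `x` to `y`.
-/

namespace SimpleGraph.Walk

variable {G : SimpleGraph V}

lemma IsPath.eq_of_mem_edges_of_start_mem {u v : V} {p : G.Walk u v} (hp : p.IsPath)
    {e : Sym2 V} (he : e ∈ p.edges) (hu : u ∈ e) : e = s(u, p.snd) := by
  obtain ⟨z, rfl⟩ := Sym2.mem_iff_exists.mp hu
  rw [hp.snd_of_toSubgraph_adj (adj_toSubgraph_iff_mem_edges.mpr he)]

lemma IsCycle.exists_edges_at_eq_pair {u v : V} {c : G.Walk u u} (hc : c.IsCycle)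
    (hv : v ∈ c.support) :
    ∃ a b, a ≠ b ∧ ∀ e, e ∈ c.edges ∧ v ∈ e ↔ e = s(v, a) ∨ e = s(v, b) := by
  obtain ⟨a, b, hab, hN⟩ := Set.ncard_eq_two.mp (hc.ncard_neighborSet_toSubgraph_eq_two hv)
  have hadj : ∀ z, s(v, z) ∈ c.edges ↔ z = a ∨ z = b := fun z => by
    rw [← adj_toSubgraph_iff_mem_edges, ← Subgraph.mem_neighborSet, hN]
    rfl
  refine ⟨a, b, hab, fun e => ⟨fun ⟨he, hve⟩ => ?_, ?_⟩⟩
  · obtain ⟨z, rfl⟩ := Sym2.mem_iff_exists.mp hve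
    rcases (hadj z).mp he with rfl | rfl <;> simp
  · rintro (rfl | rfl)
    · exact ⟨(hadj a).mpr (Or.inl rfl), Sym2.mem_mk_left _ _⟩
    · exact ⟨(hadj b).mpr (Or.inr rfl), Sym2.mem_mk_left _ _⟩

lemma IsCycle.exists_mem_edges_ne {u v : V} {c : G.Walk u u} (hc : c.IsCycle) {e : Sym2 V}
    (he : e ∈ c.edges) (hv : v ∈ e) : ∃ f ∈ c.edges, f ≠ e ∧ v ∈ f := by
  obtain ⟨a, b, hab, hedges⟩ := hc.exists_edges_at_eq_pair (c.mem_support_of_mem_edges he hv)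
  have ha := (hedges s(v, a)).mpr (Or.inl rfl)
  have hb := (hedges s(v, b)).mpr (Or.inr rfl)
  rcases (hedges e).mp ⟨he, hv⟩ with rfl | rfl
  · exact ⟨s(v, b), hb.1, fun h => hab (Sym2.congr_right.mp h).symm, hb.2⟩
  · exact ⟨s(v, a), ha.1, fun h => hab (Sym2.congr_right.mp h), ha.2⟩

lemma IsCycle.eq_or_eq_or_eq_of_mem_edges {u v : V} {c : G.Walk u u} (hc : c.IsCycle)
    {e f g : Sym2 V} (he : e ∈ c.edges) (hf : f ∈ c.edges) (hg : g ∈ c.edges)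
    (hve : v ∈ e) (hvf : v ∈ f) (hvg : v ∈ g) : e = f ∨ e = g ∨ f = g := by
  obtain ⟨a, b, -, hedges⟩ := hc.exists_edges_at_eq_pair (c.mem_support_of_mem_edges he hve)
  rcases (hedges e).mp ⟨he, hve⟩ with rfl | rfl <;>
  rcases (hedges f).mp ⟨hf, hvf⟩ with rfl | rfl <;>
  rcases (hedges g).mp ⟨hg, hvg⟩ with rfl | rfl <;> simp

def ofSeq (a : ℕ → V) (h : ∀ i, G.Adj (a i) (a (i + 1))) : (n : ℕ) → G.Walk (a 0) (a n)
  | 0 => nil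
  | n + 1 => (ofSeq a h n).concat (h n)

variable {a : ℕ → V} {h : ∀ i, G.Adj (a i) (a (i + 1))}

@[simp] lemma length_ofSeq (n : ℕ) : (ofSeq a h n).length = n := by
  induction n with
  | zero => rfl
  | succ n ih => simp [ofSeq, ih]

lemma support_ofSeq (n : ℕ) : (ofSeq a h n).support = (List.range (n + 1)).map a := by
  induction n with
  | zero => rfl
  | succ n ih => rw [ofSeq, support_concat, ih]; simp [List.range_succ]

lemma edges_ofSeq (n : ℕ) :
    (ofSeq a h n).edges = (List.range n).map fun i => s(a i, a (i + 1)) := by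
  induction n with
  | zero => rfl
  | succ n ih => rw [ofSeq, edges_concat, ih, List.range_succ]; simp

lemma isPath_ofSeq {n : ℕ} (ha : Set.InjOn a (Set.Iic n)) : (ofSeq a h n).IsPath := by
  rw [isPath_def, support_ofSeq]
  refine List.Nodup.map_on (fun i hi j hj hij => ha ?_ ?_ hij) List.nodup_range <;>
    simp_all

lemma isSaturatedPath_ofSeq {M : Set (Sym2 V)} {n : ℕ} (ha : Set.InjOn a (Set.Iic n))
    (hn : Odd n) (hM : ∀ j, 2 * j < n → s(a (2 * j), a (2 * j + 1)) ∈ M) :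
    IsSaturatedPath M (ofSeq a h n) := by
  refine ⟨isPath_ofSeq ha, by simpa using hn, fun v hv => ?_⟩
  obtain ⟨i, hi, rfl⟩ := List.mem_map.mp (support_ofSeq (h := h) n ▸ hv)
  have hi : i ≤ n := Nat.lt_succ_iff.mp (List.mem_range.mp hi)
  have hjn : 2 * (i / 2) < n := by obtain ⟨k, rfl⟩ := hn; omega
  refine ⟨s(a (2 * (i / 2)), a (2 * (i / 2) + 1)), ?_, hM _ hjn, ?_⟩
  · rw [edges_ofSeq]
    exact List.mem_map.mpr ⟨_, List.mem_range.mpr hjn, rfl⟩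
  · rcases Nat.even_or_odd' i with ⟨j, rfl | rfl⟩
    · simp
    · simp [show (2 * j + 1) / 2 = j by omega]

end SimpleGraph.Walk

section Matchings

open Walk

variable {G : SimpleGraph V} {M : Set (Sym2 V)}

lemma MAlternating.mem_edges_of_mem {u : V} {c : G.Walk u u} (hc : c.IsCycle)
    (halt : MAlternating M c) (hM : DisjointEdges M) {e f : Sym2 V} {v : V}
    (hf : f ∈ c.edges) (hfM : f ∉ M) (he : e ∈ M) (hvf : v ∈ f) (hve : v ∈ e) :
    e ∈ c.edges := by
  by_contra heC
  obtain ⟨g, hg, hgf, hvg⟩ := hc.exists_mem_edges_ne hf hvf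
  by_cases hgM : g ∈ M
  · exact hM g hgM e he (fun h => heC (h ▸ hg)) v hvg hve
  · exact halt f hf g hg hfM hgM (Ne.symm hgf) v hvf hvg

lemma IsPerfectMatchingSet.symmDiff_edgeSet {u : V} {c : G.Walk u u}
    (hM : IsPerfectMatchingSet G M) (hc : c.IsCycle) (halt : MAlternating M c) :
    IsPerfectMatchingSet G (symmDiff M c.edgeSet) := by
  refine ⟨⟨?_, ?_⟩, fun v => ?_⟩
  · rintro e (⟨he, -⟩ | ⟨he, -⟩)
    · exact hM.1.1 he
    · exact c.edges_subset_edgeSet he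
  · rintro e (⟨heM, heC⟩ | ⟨heC, heM⟩) f (⟨hfM, hfC⟩ | ⟨hfC, hfM⟩) hef v hve hvf
    · exact hM.1.2 e heM f hfM hef v hve hvf
    · exact heC (halt.mem_edges_of_mem hc hM.1.2 hfC hfM heM hvf hve)
    · exact hfC (halt.mem_edges_of_mem hc hM.1.2 heC heM hfM hve hvf)
    · exact halt e heC f hfC heM hfM hef v hve hvf
  · obtain ⟨e, heM, hve⟩ := hM.2 v
    by_cases heC : e ∈ c.edges
    · obtain ⟨g, hg, hge, hvg⟩ := hc.exists_mem_edges_ne heC hve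
      exact ⟨g, Or.inr ⟨hg, fun hgM => hM.1.2 g hgM e heM hge v hvg hve⟩, hvg⟩
    · exact ⟨e, Or.inl ⟨heM, heC⟩, hve⟩

lemma IsPerfectMatchingSet.exists_mate (hM : IsPerfectMatchingSet G M) :
    ∃ m : V → V, (∀ v, G.Adj v (m v)) ∧ ∀ v w, s(v, w) ∈ M ↔ w = m v := by
  have hex : ∀ v, ∃ w, s(v, w) ∈ M := fun v => by
    obtain ⟨e, he, hv⟩ := hM.2 v
    obtain ⟨w, rfl⟩ := Sym2.mem_iff_exists.mp hv
    exact ⟨w, he⟩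
  choose m hm using hex
  refine ⟨m, fun v => G.mem_edgeSet.mp (hM.1.1 (hm v)), fun v w => ⟨fun hw => ?_, ?_⟩⟩
  · by_contra hne
    have hvw : s(v, w) ≠ s(v, m v) := fun h => hne (Sym2.congr_right.mp h)
    exact hM.1.2 _ hw _ (hm v) hvw v (Sym2.mem_mk_left _ _) (Sym2.mem_mk_left _ _)
  · rintro rfl
    exact hm v

lemma involutive_of_mem_iff {m : V → V} (hm : ∀ v w, s(v, w) ∈ M ↔ w = m v) : m.Involutive :=
  fun v => ((hm (m v) v).mp (Sym2.eq_swap ▸ (hm v (m v)).mpr rfl)).symm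

variable {u v : V} {p : G.Walk u v}

lemma IsSaturatedPath.isCycle_cons (hp : IsSaturatedPath M p) (h : G.Adj v u)
    (hvu : s(v, u) ∉ M) : (cons h p).IsCycle := by
  refine (cons_isCycle_iff p h).mpr ⟨hp.1, fun hvuC => hvu ?_⟩
  obtain ⟨g, hg, hgM, hug⟩ := hp.2.2 u p.start_mem_support
  rwa [hp.1.eq_of_mem_edges_of_start_mem hvuC (Sym2.mem_mk_right v u),
    ← hp.1.eq_of_mem_edges_of_start_mem hg hug]

lemma IsSaturatedPath.mAlternating_cons (hp : IsSaturatedPath M p) (h : G.Adj v u)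
    (hc : (cons h p).IsCycle) : MAlternating M (cons h p) := by
  intro e he f hf heM hfM hef w hwe hwf
  have hw : w ∈ p.support := by
    have := (cons h p).mem_support_of_mem_edges he hwe
    rw [support_cons, List.mem_cons] at this
    exact this.elim (fun hwv => hwv ▸ p.end_mem_support) id
  obtain ⟨g, hg, hgM, hwg⟩ := hp.2.2 w hw
  have hgC : g ∈ (cons h p).edges := by rw [edges_cons]; exact List.mem_cons_of_mem _ hg
  rcases hc.eq_or_eq_or_eq_of_mem_edges he hf hgC hwe hwf hwg with h | h | h
  · exact hef h
  · exact heM (h ▸ hgM)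
  · exact hfM (h ▸ hgM)

end Matchings

section AlternatingSequence

variable (m n : V → V)

def altStep (t : ℕ) : V → V := if Even t then m else n

def altSeq (x : V) : ℕ → V
  | 0 => x
  | t + 1 => altStep m n t (altSeq x t)

variable {m n}

lemma altStep_add_two_mul (t d : ℕ) : altStep m n (t + 2 * d) = altStep m n t := by
  simp [altStep, Nat.even_add]

lemma altStep_involutive (hm : m.Involutive) (hn : n.Involutive) (t : ℕ) :
    (altStep m n t).Involutive := by
  unfold altStep; split_ifs <;> assumption

lemma altStep_ne (hm : ∀ v, m v ≠ v) (hn : ∀ v, n v ≠ v) (t : ℕ) (v : V) :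
    altStep m n t v ≠ v := by
  unfold altStep; split_ifs
  exacts [hm v, hn v]

lemma altSeq_eq_altStep_altSeq_succ (hm : m.Involutive) (hn : n.Involutive) (x : V) (t : ℕ) :
    altSeq m n x t = altStep m n t (altSeq m n x (t + 1)) :=
  (altStep_involutive hm hn t _).symm

lemma altSeq_two_mul_eq_of_eq (hm : m.Involutive) (hn : n.Involutive) {x : V} {d : ℕ} :
    ∀ {s : ℕ}, altSeq m n x s = altSeq m n x (s + 2 * d) → altSeq m n x (2 * d) = x
  | 0, h => by rw [zero_add] at h; exact h.symm
  | s + 1, h => altSeq_two_mul_eq_of_eq hm hn (s := s) <| calc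
      altSeq m n x s = altStep m n s (altSeq m n x (s + 1)) :=
        altSeq_eq_altStep_altSeq_succ hm hn x s
      _ = altStep m n (s + 2 * d) (altSeq m n x (s + 2 * d + 1)) := by
        rw [h, altStep_add_two_mul, Nat.add_right_comm]
      _ = altSeq m n x (s + 2 * d) := (altSeq_eq_altStep_altSeq_succ hm hn x _).symm

lemma altSeq_ne_add_odd (hm : m.Involutive) (hn : n.Involutive) (hm' : ∀ v, m v ≠ v)
    (hn' : ∀ v, n v ≠ v) (x : V) : ∀ d s : ℕ, altSeq m n x s ≠ altSeq m n x (s + (2 * d + 1))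
  | 0, s, h => altStep_ne hm' hn' s _ h.symm
  | d + 1, s, h => altSeq_ne_add_odd hm hn hm' hn' x d (s + 1) <| by
    have hs : s + 1 + (2 * d + 1) = s + 2 * (d + 1) := by ring
    rw [hs, altSeq_eq_altStep_altSeq_succ hm hn x (s + 2 * (d + 1)), altStep_add_two_mul,
      show s + 2 * (d + 1) + 1 = s + (2 * (d + 1) + 1) by ring, ← h]
    rfl

lemma exists_altSeq_two_mul_eq [Finite V] (hm : m.Involutive) (hn : n.Involutive) (x : V) :
    ∃ k, 0 < k ∧ altSeq m n x (2 * k) = x := by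
  obtain ⟨i, j, hij, h⟩ := Finite.exists_ne_map_eq_of_infinite fun t => altSeq m n x (2 * t)
  wlog hlt : i < j generalizing i j
  · exact this j i hij.symm h.symm (lt_of_le_of_ne (not_lt.mp hlt) hij.symm)
  obtain ⟨d, rfl⟩ := Nat.exists_eq_add_of_lt hlt
  refine ⟨d + 1, d.succ_pos, altSeq_two_mul_eq_of_eq hm hn (s := 2 * i) ?_⟩
  simpa [mul_add, add_assoc] using h

lemma altSeq_injOn (hm : m.Involutive) (hn : n.Involutive) (hm' : ∀ v, m v ≠ v)
    (hn' : ∀ v, n v ≠ v) {x : V} {k : ℕ} (hk : ∀ j, 0 < j → j < k → altSeq m n x (2 * j) ≠ x) :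
    Set.InjOn (altSeq m n x) (Set.Iio (2 * k)) := by
  intro s hs t ht hst
  wlog hlt : s < t generalizing s t
  · exact (lt_or_eq_of_le (not_lt.mp hlt)).elim
      (fun h => (this ht hs hst.symm h).symm) Eq.symm
  obtain ⟨d, rfl⟩ := Nat.exists_eq_add_of_lt hlt
  obtain ⟨e, he | he⟩ := Nat.even_or_odd' (d + 1)
  · rw [add_assoc, he] at hst
    exact absurd (altSeq_two_mul_eq_of_eq hm hn hst) (hk e (by omega) (by simp at ht; omega))
  · rw [add_assoc, he] at hst
    exact absurd hst (altSeq_ne_add_odd hm hn hm' hn' x e s)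

end AlternatingSequence

lemma exists_isSaturatedPath_of_mem [Finite V] {G : SimpleGraph V} {M N : Set (Sym2 V)}
    (hM : IsPerfectMatchingSet G M) (hN : IsPerfectMatchingSet G N) {x y : V}
    (hxy : s(x, y) ∈ N) : ∃ p : G.Walk x y, IsSaturatedPath M p := by
  classical
  obtain ⟨m, hmG, hmM⟩ := hM.exists_mate
  obtain ⟨n, hnG, hnN⟩ := hN.exists_mate
  have hm := involutive_of_mem_iff hmM
  have hn := involutive_of_mem_iff hnN
  have hm' : ∀ v, m v ≠ v := fun v => (hmG v).ne'
  have hn' : ∀ v, n v ≠ v := fun v => (hnG v).ne'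
  have hadj : ∀ t, G.Adj (altSeq m n x t) (altSeq m n x (t + 1)) := fun t => by
    show G.Adj _ (altStep m n t _)
    unfold altStep; split_ifs
    exacts [hmG _, hnG _]
  have hperiod := exists_altSeq_two_mul_eq hm hn x
  set k := Nat.find hperiod
  obtain ⟨hk, hkx⟩ : 0 < k ∧ altSeq m n x (2 * k) = x := Nat.find_spec hperiod
  have hinj : Set.InjOn (altSeq m n x) (Set.Iio (2 * k)) :=
    altSeq_injOn hm hn hm' hn' fun j hj hjk hjx => Nat.find_min hperiod hjk ⟨hj, hjx⟩
  have hend : altSeq m n x (2 * k - 1) = y := by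
    have hodd : ¬ Even (2 * k - 1) := by rw [Nat.not_even_iff_odd]; exact ⟨k - 1, by omega⟩
    rw [altSeq_eq_altStep_altSeq_succ hm hn, Nat.sub_add_cancel (by omega), hkx, altStep,
      if_neg hodd, ← (hnN x y).mp hxy]
  rw [← hend]
  refine ⟨Walk.ofSeq _ hadj _, Walk.isSaturatedPath_ofSeq (hinj.mono ?_) ⟨k - 1, by omega⟩
    fun j _ => (hmM _ _).mpr ?_⟩
  · intro t ht
    simp only [Set.mem_Iic, Set.mem_Iio] at ht ⊢
    omega
  · show altStep m n (2 * j) _ = _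
    rw [altStep, if_pos (even_two_mul j)]

theorem statement_3_general {V : Type*} [Fintype V] (G : SimpleGraph V)
    (M : Set (Sym2 V)) (hM : IsPerfectMatchingSet G M)
    (x y : V) (he : G.Adj x y) (heM : s(x, y) ∉ M) :
    (Allowed G s(x, y) ↔
      ∃ (w : V) (p : G.Walk w w), p.IsCycle ∧ MAlternating M p ∧ s(x, y) ∈ p.edges) ∧
    (Allowed G s(x, y) ↔ ∃ p : G.Walk x y, IsSaturatedPath M p) := by
  have path_of_allowed : Allowed G s(x, y) → ∃ p : G.Walk x y, IsSaturatedPath M p :=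
    fun ⟨_, hN, hxyN⟩ => exists_isSaturatedPath_of_mem hM hN hxyN
  have cycle_of_path : (∃ p : G.Walk x y, IsSaturatedPath M p) →
      ∃ (w : V) (p : G.Walk w w), p.IsCycle ∧ MAlternating M p ∧ s(x, y) ∈ p.edges := by
    rintro ⟨p, hp⟩
    have hc := hp.isCycle_cons he.symm (by rwa [Sym2.eq_swap])
    exact ⟨y, _, hc, hp.mAlternating_cons he.symm hc, by simp [Sym2.eq_swap]⟩
  have allowed_of_cycle : (∃ (w : V) (p : G.Walk w w), p.IsCycle ∧ MAlternating M p ∧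
      s(x, y) ∈ p.edges) → Allowed G s(x, y) := fun ⟨_, _, hc, halt, hxy⟩ =>
    ⟨_, hM.symmDiff_edgeSet hc halt, Or.inr ⟨hxy, heM⟩⟩
  exact ⟨⟨fun h => cycle_of_path (path_of_allowed h), allowed_of_cycle⟩,
    ⟨path_of_allowed, fun h => allowed_of_cycle (cycle_of_path h)⟩⟩

/-- Let `G` be a factorizable finite simple graph, `M` a perfect matching
of `G`, and `e = xy` an edge of `G` not in `M`. TFAE: (i) `e` is allowed; (ii) there is an
`M`-alternating cycle containing `e`; (iii) there is an `M`-saturated path between `x`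
and `y`. -/
theorem statement_3 {V : Type*} [Fintype V] (G : SimpleGraph V) (hG : Factorizable G)
    (M : Set (Sym2 V)) (hM : IsPerfectMatchingSet G M)
    (x y : V) (he : G.Adj x y) (heM : s(x, y) ∉ M) :
    (Allowed G s(x, y) ↔
      ∃ (w : V) (p : G.Walk w w), p.IsCycle ∧ MAlternating M p ∧ s(x, y) ∈ p.edges) ∧
    (Allowed G s(x, y) ↔ ∃ p : G.Walk x y, IsSaturatedPath M p) :=
  statement_3_general G M hM x y he heM
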